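/- Let h : {0,1,2}* → {0,1}* be the morphism with h(0)=1, h(1)=10, h(2)=100. Then h is injective on {0,1,2}*, and every word s ∈ {0,1}* can be written in one of the forms y, yw, (zx)*z, yx(zx)*z, (zx)*zw, or yx(zx)*zw, where y ∈ {ε, 0, 00}, x ∈ {1,10,100}*·1, z ∈ 000·0*, and w ∈ {1,10,100}^+. -/

import Mathlib

open Computability

/-!
Every codeword is `1` followed by zeros, so `h (a :: s) = 1 :: 0^a ++ h s` and `h s` never starts
with `0`: the letter `a`, and then `s`, can be read off `h (a :: s)`.

For the decomposition, a word either avoids `000` or is cut at its first and last block of at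
least three zeros. The language `L` of these factorizations is closed under prepending `0` and
`1`, hence contains every word; expanding `C∗ = 1 + W` and sliding `Z (X Z)∗ ≤ (Z X)∗ Z` then
yields the six forms.
-/

/-- The morphism `h : {0,1,2}* → {0,1}*` with `h(0) = 1`, `h(1) = 10`, `h(2) = 100`. -/
def hMorph : List (Fin 3) → List (Fin 2) :=
  fun s => s.flatMap fun c =>
    if c = 0 then [1] else if c = 1 then [1, 0] else [1, 0, 0]

theorem List.replicate_append_inj {α : Type*} {x : α} {m n : ℕ} {l l' : List α}
    (hl : l.head? ≠ some x) (hl' : l'.head? ≠ some x)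
    (h : replicate m x ++ l = replicate n x ++ l') : m = n ∧ l = l' := by
  induction m generalizing n with
  | zero => cases n <;> simp_all [replicate_succ]
  | succ m ih =>
    cases n with
    | zero =>
      obtain rfl : l' = _ := by simpa using h.symm
      simp [replicate_succ] at hl'
    | succ n => simpa using ih (by simpa [replicate_succ] using h)

theorem hMorph_nil : hMorph [] = [] := rfl

theorem hMorph_cons (a : Fin 3) (s : List (Fin 3)) :
    hMorph (a :: s) = 1 :: List.replicate a 0 ++ hMorph s := by
  fin_cases a <;> rfl

theorem hMorph_head?_ne_zero (s : List (Fin 3)) : (hMorph s).head? ≠ some 0 := by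
  cases s <;> simp [hMorph_nil, hMorph_cons]

theorem hMorph_injective : Function.Injective hMorph := by
  intro u
  induction u with
  | nil => rintro (_ | ⟨b, v⟩) h <;> simp_all [hMorph_nil, hMorph_cons]
  | cons a u ih =>
    rintro (_ | ⟨b, v⟩) h
    · simp [hMorph_nil, hMorph_cons] at h
    · rw [hMorph_cons, hMorph_cons, List.cons_append, List.cons_append, List.cons_inj_right] at h
      obtain ⟨hab, huv⟩ := List.replicate_append_inj (hMorph_head?_ne_zero u)
        (hMorph_head?_ne_zero v) h
      rw [Fin.val_injective hab, ih huv]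

theorem mul_mul_kstar_le_kstar_mul {α : Type*} [KleeneAlgebra α] (a b : α) :
    a * (b * a)∗ ≤ (a * b)∗ * a := by
  refine mul_kstar_le (le_mul_of_one_le_left' one_le_kstar) ?_
  calc (a * b)∗ * a * (b * a) = (a * b)∗ * (a * b) * a := by simp only [mul_assoc]
    _ ≤ (a * b)∗ * a := by grw [kstar_mul_le_kstar]

namespace Language

variable {α : Type*} {l : Language α} {a b : List α}

theorem mem_singleton_self (a : List α) : a ∈ ({a} : Language α) := rfl

theorem append_mem_kstar (ha : a ∈ l) (hb : b ∈ l∗) : a ++ b ∈ l∗ :=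
  (mul_kstar_le_kstar : l * l∗ ≤ l∗) (append_mem_mul ha hb)

end Language

namespace hMorph

open Language

def Y : Language (Fin 2) := {[], [0], [0, 0]}
def C : Language (Fin 2) := {[1], [1, 0], [1, 0, 0]}
def X : Language (Fin 2) := C∗ * {[1]}
def Z : Language (Fin 2) := {[0, 0, 0]} * ({[0]} : Language (Fin 2))∗
def W : Language (Fin 2) := C∗ * C

theorem mem_Y {y : List (Fin 2)} : y ∈ Y ↔ y = [] ∨ y = [0] ∨ y = [0, 0] := Iff.rfl

theorem mem_C {c : List (Fin 2)} : c ∈ C ↔ c = [1] ∨ c = [1, 0] ∨ c = [1, 0, 0] := Iff.rfl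

theorem cons_one_mem_C {y : List (Fin 2)} (hy : y ∈ Y) : 1 :: y ∈ C := by
  rcases hy with rfl | rfl | rfl <;> simp [mem_C]

theorem cons_zero_mem_Y_or_eq {y : List (Fin 2)} (hy : y ∈ Y) :
    0 :: y ∈ Y ∨ 0 :: y = [0, 0, 0] := by
  rcases hy with rfl | rfl | rfl <;> simp [mem_Y]

theorem zeros_mem_Z : [0, 0, 0] ∈ Z :=
  append_mem_mul (mem_singleton_self _) (nil_mem_kstar _)

theorem cons_zero_mem_Z {z : List (Fin 2)} (hz : z ∈ Z) : 0 :: z ∈ Z := by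
  obtain ⟨_, rfl, r, hr, rfl⟩ := mem_mul.1 hz
  exact append_mem_mul (mem_singleton_self _) (append_mem_kstar (mem_singleton_self [0]) hr)

theorem cons_one_mem_X {u : List (Fin 2)} (hu : u ∈ 1 + Y * X) : 1 :: u ∈ X := by
  rcases hu with rfl | hu
  · exact append_mem_mul (nil_mem_kstar C) (mem_singleton_self _)
  · obtain ⟨y, hy, _, ⟨c, hc, _, rfl, rfl⟩, rfl⟩ := mem_mul.1 hu
    simpa [X] using
      append_mem_mul (append_mem_kstar (cons_one_mem_C hy) hc) (mem_singleton_self [1])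

theorem X_le_Y_mul_X : X ≤ Y * X := fun _ hx => append_mem_mul (mem_Y.2 (Or.inl rfl)) hx

/-- This is `(Z X)∗ Z` (see `mul_mul_kstar_le_kstar_mul`), written so that a prepended `0` is
absorbed by the leading `Z`. -/
def P : Language (Fin 2) := Z * (X * Z)∗

theorem Z_le_P : Z ≤ P := le_mul_of_one_le_right' one_le_kstar

theorem cons_zero_mem_P {p : List (Fin 2)} (hp : p ∈ P) : 0 :: p ∈ P := by
  obtain ⟨z, hz, r, hr, rfl⟩ := mem_mul.1 hp
  exact append_mem_mul (cons_zero_mem_Z hz) hr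

theorem append_append_mem_P {z x p : List (Fin 2)} (hz : z ∈ Z) (hx : x ∈ X) (hp : p ∈ P) :
    z ++ x ++ p ∈ P := by
  obtain ⟨z', hz', r, hr, rfl⟩ := mem_mul.1 hp
  simpa only [P, List.append_assoc] using
    append_mem_mul hz (append_mem_kstar (append_mem_mul hx hz') hr)

/-- In the second summand, `u ∈ 1 + Y X` precedes the first block of at least three zeros,
`p ∈ P` runs to the end of the last one, and `c ∈ C∗` is the rest. -/
def L : Language (Fin 2) := Y * C∗ + (1 + Y * X) * P * C∗

theorem append_mem_L {y c : List (Fin 2)} (hy : y ∈ Y) (hc : c ∈ C∗) : y ++ c ∈ L :=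
  Or.inl (append_mem_mul hy hc)

theorem append_append_mem_L {u p c : List (Fin 2)} (hu : u ∈ 1 + Y * X) (hp : p ∈ P)
    (hc : c ∈ C∗) : u ++ p ++ c ∈ L :=
  Or.inr (append_mem_mul (append_mem_mul hu hp) hc)

theorem cons_zero_mem_L {s : List (Fin 2)} (hs : s ∈ L) : 0 :: s ∈ L := by
  rcases hs with hs | hs
  · obtain ⟨y, hy, c, hc, rfl⟩ := mem_mul.1 hs
    rcases cons_zero_mem_Y_or_eq hy with hy' | hy'
    · exact append_mem_L hy' hc
    · rw [← List.cons_append, hy']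
      exact append_append_mem_L (u := []) (Or.inl nil_mem_one) (Z_le_P zeros_mem_Z) hc
  · obtain ⟨_, ⟨u, hu | hu, p, hp, rfl⟩, c, hc, rfl⟩ := mem_mul.1 hs
    · obtain rfl : u = [] := hu
      exact append_append_mem_L (Or.inl nil_mem_one) (cons_zero_mem_P hp) hc
    · obtain ⟨y, hy, x, hx, rfl⟩ := mem_mul.1 hu
      rcases cons_zero_mem_Y_or_eq hy with hy' | hy'
      · exact append_append_mem_L (u := 0 :: y ++ x) (Or.inr (append_mem_mul hy' hx)) hp hc
      · have := append_append_mem_L (u := []) (Or.inl nil_mem_one)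
          (append_append_mem_P (hy' ▸ zeros_mem_Z) hx hp) hc
        simpa only [List.nil_append, List.cons_append, List.append_assoc] using this

theorem cons_one_mem_L {s : List (Fin 2)} (hs : s ∈ L) : 1 :: s ∈ L := by
  rcases hs with hs | hs
  · obtain ⟨y, hy, c, hc, rfl⟩ := mem_mul.1 hs
    exact append_mem_L (y := []) (mem_Y.2 (Or.inl rfl)) (append_mem_kstar (cons_one_mem_C hy) hc)
  · obtain ⟨_, ⟨u, hu, p, hp, rfl⟩, c, hc, rfl⟩ := mem_mul.1 hs
    exact append_append_mem_L (u := 1 :: u) (Or.inr (X_le_Y_mul_X (cons_one_mem_X hu))) hp hc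

theorem mem_L (s : List (Fin 2)) : s ∈ L := by
  induction s with
  | nil => exact append_mem_L (mem_Y.2 (Or.inl rfl)) (nil_mem_kstar C)
  | cons a s ih =>
    fin_cases a
    · exact cons_zero_mem_L ih
    · exact cons_one_mem_L ih

theorem eq_nil_or_mem_W {c : List (Fin 2)} (hc : c ∈ C∗) : c = [] ∨ c ∈ W := by
  rwa [← one_add_kstar_mul_self_eq_kstar] at hc

theorem mem_decomposition (s : List (Fin 2)) :
    s ∈ Y ∨ s ∈ Y * W ∨ s ∈ (Z * X)∗ * Z ∨ s ∈ Y * X * ((Z * X)∗ * Z) ∨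
      s ∈ (Z * X)∗ * Z * W ∨ s ∈ Y * X * ((Z * X)∗ * Z) * W := by
  have hP {p : List (Fin 2)} (hp : p ∈ P) : p ∈ (Z * X)∗ * Z :=
    mul_mul_kstar_le_kstar_mul Z X hp
  rcases mem_L s with hs | hs
  · obtain ⟨y, hy, c, hc, rfl⟩ := mem_mul.1 hs
    rcases eq_nil_or_mem_W hc with rfl | hw
    · simpa using Or.inl hy
    · exact Or.inr (Or.inl (append_mem_mul hy hw))
  · obtain ⟨_, ⟨u, hu | hu, p, hp, rfl⟩, c, hc, rfl⟩ := mem_mul.1 hs <;>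
      rcases eq_nil_or_mem_W hc with rfl | hw
    · obtain rfl : u = [] := hu
      simpa using Or.inr (Or.inr (Or.inl (hP hp)))
    · obtain rfl : u = [] := hu
      exact Or.inr (Or.inr (Or.inr (Or.inr (Or.inl (append_mem_mul (hP hp) hw)))))
    · simpa using Or.inr (Or.inr (Or.inr (Or.inl (append_mem_mul hu (hP hp)))))
    · exact Or.inr (Or.inr (Or.inr (Or.inr (Or.inr
        (append_mem_mul (append_mem_mul hu (hP hp)) hw)))))

end hMorph

theorem hMorph_injective_and_decomposition :
    Function.Injective hMorph ∧
    ∀ s : List (Fin 2),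
      let Y : Language (Fin 2) := {[], [0], [0, 0]}
      let C : Language (Fin 2) := {[1], [1, 0], [1, 0, 0]}
      let X : Language (Fin 2) := C∗ * {[1]}
      let Z : Language (Fin 2) := {[0, 0, 0]} * ({[0]} : Language (Fin 2))∗
      let W : Language (Fin 2) := C∗ * C
      s ∈ Y ∨ s ∈ Y * W ∨ s ∈ (Z * X)∗ * Z ∨ s ∈ Y * X * ((Z * X)∗ * Z) ∨
        s ∈ (Z * X)∗ * Z * W ∨ s ∈ Y * X * ((Z * X)∗ * Z) * W :=
  ⟨hMorph_injective, hMorph.mem_decomposition⟩
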